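/- Fix α ∈ ℝ and let α − S := {α − s : s ∈ S}. For every Borel measurable function f : ℝ² → [0, ∞] and every θ ∈ ℝ, one has E[ f(L^{θ}_{α−S}, R^{θ}_{α−S}) ] = E[ f(α − R^{α−θ}_{S}, α − L^{α−θ}_{S}) ]; that is, the stepping-out distribution for the set α − S started at θ equals the pushforward under (ℓ, r) ↦ (α − r, α − ℓ) of the stepping-out distribution for S started at α − θ. -/

import Mathlib

open MeasureTheory ProbabilityTheory Set
open scoped ENNReal

/-- The left stepping-out points `L^x_{B,i} := x − u − (i − 1)·w`. -/
noncomputable def Lpt (x u w : ℝ) (i : ℕ) : ℝ := x - u - ((i : ℝ) - 1) * w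

/-- The right stepping-out points `R^x_{B,i} := x − u + i·w`. -/
noncomputable def Rpt (x u w : ℝ) (i : ℕ) : ℝ := x - u + i * w

/-- The left endpoint `L^x_B := L^x_{B,τ}` of the stepping-out procedure with `m = ∞`,
where `τ := inf{i ≥ 1 : L^x_{B,i} ∉ B}`. -/
noncomputable def Lout (B : Set ℝ) (x u w : ℝ) : ℝ :=
  Lpt x u w (sInf {i : ℕ | 1 ≤ i ∧ Lpt x u w i ∉ B})

/-- The right endpoint `R^x_B := R^x_{B,𝔗}` of the stepping-out procedure with `m = ∞`,
where `𝔗 := inf{i ≥ 1 : R^x_{B,i} ∉ B}`. -/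
noncomputable def Rout (B : Set ℝ) (x u w : ℝ) : ℝ :=
  Rpt x u w (sInf {i : ℕ | 1 ≤ i ∧ Rpt x u w i ∉ B})

/-! The reflection `y ↦ α - y` carries the left grid `Lpt θ u w i` onto the right grid
`Rpt (α - θ) (w - u) w i` and vice versa, with the same indices, so `y ∉ α - S` happens at the
same steps as `α - y ∉ S`: pointwise in the offset, the stepping-out interval for `α - S` from `θ`
is the reflection of the one for `S` from `α - θ` with offset `w - u`. Since `w - Υ` has the same
uniform law on `(0, w)` as `Υ`, the two expectations agree. -/

lemma Nat.sInf_eq_iff {s : Set ℕ} {n : ℕ} :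
    sInf s = n ↔ (n ∈ s ∨ s = ∅ ∧ n = 0) ∧ ∀ m < n, m ∉ s := by
  rcases s.eq_empty_or_nonempty with rfl | hs
  · simp [eq_comm]
  · refine ⟨?_, fun ⟨hn, hmin⟩ => ?_⟩
    · rintro rfl
      exact ⟨.inl (Nat.sInf_mem hs), fun m => Nat.notMem_of_lt_sInf⟩
    · have hn : n ∈ s := hn.resolve_right fun h => hs.ne_empty h.1
      exact le_antisymm (Nat.sInf_le hn) (not_lt.mp fun h => hmin _ h (Nat.sInf_mem hs))

section Measurability

variable {α β : Type*} [MeasurableSpace α] [MeasurableSpace β]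

lemma measurable_sInf_setOf {p : ℕ → α → Prop} (hp : ∀ i, MeasurableSet {u | p i u}) :
    Measurable fun u => sInf {i | p i u} := by
  refine measurable_to_countable' fun n => ?_
  have hpre : (fun u => sInf {i | p i u}) ⁻¹' {n}
      = ({u | p n u} ∪ ({u | ∀ i, ¬p i u} ∩ {_u | n = 0}))
        ∩ ⋂ m ∈ Finset.range n, {u | p m u}ᶜ := by
    ext u
    simp [Nat.sInf_eq_iff, Set.eq_empty_iff_forall_notMem]
  rw [hpre]
  refine ((hp n).union ?_).inter (.biInter (Finset.range n).countable_toSet fun m _ => (hp m).compl)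
  simp_rw [ofPred_forall]
  exact (MeasurableSet.iInter fun i => (hp i).compl).inter (.const _)

lemma measurable_comp_sInf_setOf {f : ℕ → α → β} {p : ℕ → α → Prop} (hf : ∀ i, Measurable (f i))
    (hp : ∀ i, MeasurableSet {u | p i u}) :
    Measurable fun u => f (sInf {i | p i u}) u :=
  (measurable_from_prod_countable_left (f := fun q : α × ℕ => f q.2 q.1) hf).comp
    (measurable_id.prodMk (measurable_sInf_setOf hp))

end Measurability

lemma measurable_Lout {B : Set ℝ} (hB : MeasurableSet B) (x w : ℝ) :
    Measurable fun u => Lout B x u w := by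
  have hL : ∀ i, Measurable fun u => Lpt x u w i := fun i => by unfold Lpt; fun_prop
  exact measurable_comp_sInf_setOf hL fun i => (MeasurableSet.const _).inter (hL i hB.compl)

lemma measurable_Rout {B : Set ℝ} (hB : MeasurableSet B) (x w : ℝ) :
    Measurable fun u => Rout B x u w := by
  have hR : ∀ i, Measurable fun u => Rpt x u w i := fun i => by unfold Rpt; fun_prop
  exact measurable_comp_sInf_setOf hR fun i => (MeasurableSet.const _).inter (hR i hB.compl)

lemma mem_image_const_sub {B : Set ℝ} {α y : ℝ} : y ∈ (fun s => α - s) '' B ↔ α - y ∈ B := by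
  rw [(show Function.Involutive fun s : ℝ => α - s from sub_sub_cancel α).image_eq_preimage_symm]
  rfl

lemma const_sub_Lpt (α x u w : ℝ) (i : ℕ) : α - Lpt x u w i = Rpt (α - x) (w - u) w i := by
  simp only [Lpt, Rpt]; ring

lemma const_sub_Rpt (α x u w : ℝ) (i : ℕ) : α - Rpt x u w i = Lpt (α - x) (w - u) w i := by
  simp only [Lpt, Rpt]; ring

lemma Lout_image_const_sub (B : Set ℝ) (α x u w : ℝ) :
    Lout ((fun s => α - s) '' B) x u w = α - Rout B (α - x) (w - u) w := by
  have hidx : {i : ℕ | 1 ≤ i ∧ Lpt x u w i ∉ (fun s => α - s) '' B}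
      = {i : ℕ | 1 ≤ i ∧ Rpt (α - x) (w - u) w i ∉ B} := by
    simp only [mem_image_const_sub, const_sub_Lpt]
  rw [Lout, Rout, hidx, const_sub_Rpt, sub_sub_cancel, sub_sub_cancel]

lemma Rout_image_const_sub (B : Set ℝ) (α x u w : ℝ) :
    Rout ((fun s => α - s) '' B) x u w = α - Lout B (α - x) (w - u) w := by
  have hidx : {i : ℕ | 1 ≤ i ∧ Rpt x u w i ∉ (fun s => α - s) '' B}
      = {i : ℕ | 1 ≤ i ∧ Lpt (α - x) (w - u) w i ∉ B} := by
    simp only [mem_image_const_sub, const_sub_Rpt]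
  rw [Rout, Lout, hidx, const_sub_Lpt, sub_sub_cancel, sub_sub_cancel]

lemma map_const_sub_volume_restrict_Ioo (a b c : ℝ) :
    (volume.restrict (Ioo a b)).map (fun x => c - x) = volume.restrict (Ioo (c - b) (c - a)) := by
  have h := ((Measure.measurePreserving_sub_left volume c).restrict_preimage
    (measurableSet_Ioo (a := c - b) (b := c - a))).map_eq
  rwa [preimage_const_sub_Ioo, sub_sub_cancel, sub_sub_cancel] at h

lemma identDistrib_const_sub_of_map_eq_smul_restrict_Ioo {Ω : Type*} [MeasurableSpace Ω]
    {P : Measure Ω} {Υ : Ω → ℝ} (hΥ : Measurable Υ) {w : ℝ} {k : ℝ≥0∞}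
    (hlaw : P.map Υ = k • volume.restrict (Ioo 0 w)) :
    IdentDistrib (fun ω => w - Υ ω) Υ P P where
  aemeasurable_fst := (measurable_const.sub hΥ).aemeasurable
  aemeasurable_snd := hΥ.aemeasurable
  map_eq := by
    change P.map ((fun x => w - x) ∘ Υ) = _
    rw [← Measure.map_map (measurable_const_sub w) hΥ, hlaw, Measure.map_smul,
      map_const_sub_volume_restrict_Ioo, sub_zero, sub_self]

theorem stmt6_general {Ω : Type*} [MeasurableSpace Ω] (P : Measure Ω)
    (w : ℝ) (S : Set ℝ) (hSmeas : MeasurableSet S)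
    (Υ : Ω → ℝ) (hΥmeas : Measurable Υ)
    (hΥ : Measure.map Υ P = (ENNReal.ofReal w)⁻¹ • volume.restrict (Ioo 0 w))
    (α : ℝ) (f : ℝ × ℝ → ℝ≥0∞) (hf : Measurable f) (θ : ℝ) :
    ∫⁻ ω, f (Lout ((fun s => α - s) '' S) θ (Υ ω) w,
             Rout ((fun s => α - s) '' S) θ (Υ ω) w) ∂P
      = ∫⁻ ω, f (α - Rout S (α - θ) (Υ ω) w, α - Lout S (α - θ) (Υ ω) w) ∂P := by
  have hg : Measurable fun u => f (α - Rout S (α - θ) u w, α - Lout S (α - θ) u w) :=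
    hf.comp ((measurable_Rout hSmeas _ w).const_sub α |>.prodMk
      ((measurable_Lout hSmeas _ w).const_sub α))
  simp only [Lout_image_const_sub, Rout_image_const_sub]
  exact ((identDistrib_const_sub_of_map_eq_smul_restrict_Ioo hΥmeas hΥ).comp hg).lintegral_eq

/-- Reflection equivariance of the stepping-out distribution (hyperparameter `m = ∞`):
the stepping-out distribution for `α − S` started at `θ` is the pushforward under
`(ℓ, r) ↦ (α − r, α − ℓ)` of the stepping-out distribution for `S` started at `α − θ`. -/
theorem stmt6 {Ω : Type*} [MeasurableSpace Ω] (P : Measure Ω) [IsProbabilityMeasure P]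
    (w : ℝ) (hw : 0 < w) (S : Set ℝ) (hSmeas : MeasurableSet S)
    (hSne : S.Nonempty) (hSb : Bornology.IsBounded S)
    (Υ : Ω → ℝ) (hΥmeas : Measurable Υ)
    (hΥ : Measure.map Υ P = (ENNReal.ofReal w)⁻¹ • volume.restrict (Ioo 0 w))
    (α : ℝ) (f : ℝ × ℝ → ℝ≥0∞) (hf : Measurable f) (θ : ℝ) :
    ∫⁻ ω, f (Lout ((fun s => α - s) '' S) θ (Υ ω) w,
             Rout ((fun s => α - s) '' S) θ (Υ ω) w) ∂P
      = ∫⁻ ω, f (α - Rout S (α - θ) (Υ ω) w, α - Lout S (α - θ) (Υ ω) w) ∂P :=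
  stmt6_general P w S hSmeas Υ hΥmeas hΥ α f hf θ
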